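/- arXiv:1605.07821 — 2 statements merged into one kernel-verified Lean document; each statement's English description precedes it below -/
import Mathlib

section
/- If m + n is even, then (-1)^{(m-n)/2} / (Γ((α-m+n)/2 + 1) · Γ((α-n+m)/2 + 1)) = -(sin(πα/2)/π) · Γ(|n-m|/2 - α/2) / Γ(|n-m|/2 + α/2 + 1). -/
open Real

lemma nat_lt_one_real {k j : ℕ} (h : (k:ℝ) + j < 1) : k = 0 ∧ j = 0 := by
  constructor <;> by_contra hc <;>
  · have h1 : (1:ℝ) ≤ (k:ℝ) + j := by
      have : 1 ≤ k + j := by omega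
      exact_mod_cast this
    linarith

lemma key (x : ℝ) (hx0 : 0 < x) (hx1 : x < 1) (k : ℕ) :
    ((-1 : ℝ) ^ k) / (Real.Gamma (x - k + 1) * Real.Gamma (x + k + 1)) =
      -(Real.sin (π * x) / π) *
        (Real.Gamma ((k : ℝ) - x) / Real.Gamma ((k : ℝ) + x + 1)) := by
  have hs : Real.sin (π * x) ≠ 0 := by
    have : 0 < Real.sin (π * x) := by
      apply Real.sin_pos_of_pos_of_lt_pi (by positivity)
      nlinarith [Real.pi_pos]
    exact this.ne'
  have hπ : (π : ℝ) ≠ 0 := Real.pi_ne_zero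
  have hC : Real.Gamma ((k : ℝ) - x) ≠ 0 := by
    apply Real.Gamma_ne_zero
    intro j hj
    have h1 : (k:ℝ) + j < 1 := by linarith
    obtain ⟨hk0, hj0⟩ := nat_lt_one_real h1
    subst hk0; subst hj0
    simp at hj
    linarith
  have hB : Real.Gamma (x + k + 1) ≠ 0 := by
    have : (0:ℝ) < x + k + 1 := by positivity
    exact (Real.Gamma_pos_of_pos this).ne'
  have hA : Real.Gamma (x - k + 1) ≠ 0 := by
    apply Real.Gamma_ne_zero
    intro j hj
    have h1 : (j:ℝ) + 1 < (k:ℝ) := by linarith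
    have h2 : (k:ℝ) < (j:ℝ) + 2 := by linarith
    have h1' : j + 1 < k := by exact_mod_cast h1
    have h2' : k < j + 2 := by exact_mod_cast h2
    omega
  have refl1 := Real.Gamma_mul_Gamma_one_sub ((k:ℝ) - x)
  rw [show (1 : ℝ) - ((k:ℝ) - x) = x - k + 1 by ring] at refl1
  have hsin : Real.sin (π * ((k:ℝ) - x)) = -((-1:ℝ)^k * Real.sin (π * x)) := by
    rw [show π * ((k:ℝ) - x) = (k:ℝ) * π - π * x by ring]
    exact Real.sin_nat_mul_pi_sub (π * x) k
  rw [hsin] at refl1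
  have hBD : Real.Gamma ((k:ℝ) + x + 1) = Real.Gamma (x + k + 1) := by ring_nf
  rw [hBD]
  have hpow : ((-1:ℝ)^k) * ((-1:ℝ)^k) = 1 := by
    rw [← pow_add]; simp [pow_mul, two_mul]
  have hs' : Real.sin (x * π) ≠ 0 := by rwa [mul_comm]
  field_simp at refl1 ⊢
  linear_combination ((-1:ℝ)^k) * refl1 - (Real.Gamma ((k:ℝ) - x) * Real.Gamma (x - k + 1) * Real.sin (x * π)) * hpow

/-- If `m + n` is even, then
`(-1)^{(m-n)/2} / (Γ((α-m+n)/2+1) Γ((α-n+m)/2+1))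
  = -(sin(πα/2)/π) Γ(|n-m|/2 - α/2) / Γ(|n-m|/2 + α/2 + 1)`. -/
theorem reflection_identity (α : ℝ) (hα : α ∈ Set.Ioo (0 : ℝ) 2) (m n : ℕ)
    (h : Even (m + n)) :
    ((-1 : ℝ) ^ (((m : ℤ) - n) / 2)) /
        (Real.Gamma ((α - m + n) / 2 + 1) * Real.Gamma ((α - n + m) / 2 + 1)) =
      -(Real.sin (π * α / 2) / π) *
        (Real.Gamma ((|(n : ℝ) - m|) / 2 - α / 2) /
          Real.Gamma ((|(n : ℝ) - m|) / 2 + α / 2 + 1)) := by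
  obtain ⟨r, hr⟩ := h
  have hx0 : 0 < α / 2 := by linarith [hα.1]
  have hx1 : α / 2 < 1 := by linarith [hα.2]
  rcases le_or_gt n m with hnm | hnm
  · obtain ⟨k, hk⟩ : ∃ k, m = n + 2 * k := ⟨(m - n)/2, by omega⟩
    subst hk
    have h1 : (((n + 2*k : ℕ) : ℤ) - n) / 2 = (k : ℤ) := by push_cast; omega
    rw [h1, zpow_natCast]
    have habs : |(n : ℝ) - (n + 2*k : ℕ)| = 2 * k := by
      push_cast
      rw [abs_sub_comm, abs_of_nonneg (by linarith [Nat.cast_nonneg (α := ℝ) k])]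
      ring
    rw [habs]
    have := key (α/2) hx0 hx1 k
    rw [show (α - (n + 2*k : ℕ) + n) / 2 + 1 = α/2 - k + 1 by push_cast; ring,
        show (α - n + (n + 2*k : ℕ)) / 2 + 1 = α/2 + k + 1 by push_cast; ring,
        show π * α / 2 = π * (α/2) by ring,
        show (2 * (k:ℝ)) / 2 - α/2 = (k:ℝ) - α/2 by ring,
        show (2 * (k:ℝ)) / 2 + α/2 + 1 = (k:ℝ) + α/2 + 1 by ring]
    exact this
  · obtain ⟨k, hk⟩ : ∃ k, n = m + 2 * k := ⟨(n - m)/2, by omega⟩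
    subst hk
    have h1 : (((m : ℤ)) - (m + 2*k : ℕ)) / 2 = -(k : ℤ) := by push_cast; omega
    rw [h1, zpow_neg, zpow_natCast]
    have hinv : ((-1 : ℝ) ^ k)⁻¹ = (-1 : ℝ) ^ k := by
      rcases Nat.even_or_odd k with he | ho
      · simp [he.neg_one_pow]
      · norm_num [ho.neg_one_pow]
    rw [hinv]
    have habs : |(m + 2*k : ℕ) - (m : ℝ)| = 2 * k := by
      push_cast
      rw [abs_of_nonneg (by linarith [Nat.cast_nonneg (α := ℝ) k])]
      ring
    rw [habs]
    have := key (α/2) hx0 hx1 k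
    rw [show (α - (m + 2*k : ℕ) + m) / 2 + 1 = α/2 - k + 1 by push_cast; ring,
        show (α - m + (m + 2*k : ℕ)) / 2 + 1 = α/2 + k + 1 by push_cast; ring,
        show π * α / 2 = π * (α/2) by ring,
        show (2 * (k:ℝ)) / 2 - α/2 = (k:ℝ) - α/2 by ring,
        show (2 * (k:ℝ)) / 2 + α/2 + 1 = (k:ℝ) + α/2 + 1 by ring]
    rw [mul_comm (Real.Gamma (α/2 + k + 1))]
    exact this
end

section
/- For every real z with z + a and z + b in the domain of Γ and z large, Γ(z+a)/Γ(z+b) = z^{a-b}(1 + (a-b)(a+b-1)/(2z) + O(|z|^{-2})) as z → ∞. -/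
open Real Filter Asymptotics Set Topology

namespace GammaRatioAux

noncomputable def gB (x : ℝ) : ℝ := (x + 1/2) * (Real.log (x+1) - Real.log x) - 1

noncomputable def gB' (x : ℝ) : ℝ :=
  (Real.log (x+1) - Real.log x) + (x + 1/2) * ((x+1)⁻¹ - x⁻¹)

noncomputable def gB'' (x : ℝ) : ℝ :=
  2 * ((x+1)⁻¹ - x⁻¹) + (x + 1/2) * (x⁻¹^2 - ((x+1)⁻¹)^2)

lemma hasDerivAt_gB {x : ℝ} (hx : 0 < x) : HasDerivAt gB (gB' x) x := by
  have h1 : HasDerivAt (fun x : ℝ => Real.log (x+1) - Real.log x)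
      ((x+1)⁻¹ - x⁻¹) x := by
    exact (((hasDerivAt_id x).add_const 1).log (by positivity)).sub
      ((hasDerivAt_id x).log hx.ne') |>.congr_deriv (by simp)
  have h2 : HasDerivAt (fun x : ℝ => x + 1/2) 1 x := (hasDerivAt_id x).add_const _
  have := h2.mul h1
  have h3 := this.sub_const 1
  refine h3.congr_deriv ?_
  unfold gB' ; ring

lemma hasDerivAt_gB' {x : ℝ} (hx : 0 < x) : HasDerivAt gB' (gB'' x) x := by
  have h1 : HasDerivAt (fun x : ℝ => Real.log (x+1) - Real.log x)
      ((x+1)⁻¹ - x⁻¹) x := by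
    exact (((hasDerivAt_id x).add_const 1).log (by positivity)).sub
      ((hasDerivAt_id x).log hx.ne') |>.congr_deriv (by simp)
  have h2 : HasDerivAt (fun x : ℝ => (x+1)⁻¹ - x⁻¹) (-((x+1)⁻¹)^2 - (-(x⁻¹^2))) x := by
    have ha : HasDerivAt (fun x : ℝ => (x+1)⁻¹) (-1/(((x:ℝ)+1)^2)) x := by
      simpa [Pi.inv_def] using ((hasDerivAt_id x).add_const 1).inv (by positivity)
    have hb : HasDerivAt (fun x : ℝ => x⁻¹) (-1/((x:ℝ)^2)) x := by
      simpa [Pi.inv_def] using (hasDerivAt_id x).inv hx.ne'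
    have := ha.sub hb
    refine this.congr_deriv ?_
    have h1 : x+1 ≠ 0 := by positivity
    rw [inv_pow, inv_pow]; ring
  have h3 : HasDerivAt (fun x : ℝ => x + 1/2) 1 x := (hasDerivAt_id x).add_const _
  have := h1.add (h3.mul h2)
  refine this.congr_deriv ?_
  unfold gB'' ; ring

lemma gB''_eq {x : ℝ} (hx : 0 < x) : gB'' x = 1/(2 * x^2 * (x+1)^2) := by
  have h1 : x + 1 ≠ 0 := by positivity
  unfold gB''; field_simp; ring

lemma gB''_nonneg {x : ℝ} (hx : 0 < x) : 0 ≤ gB'' x := by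
  rw [gB''_eq hx]; positivity

lemma gB_contOn : ContinuousOn gB (Ioi 0) := fun x hx =>
  ((hasDerivAt_gB hx).continuousAt).continuousWithinAt

lemma gB'_contOn : ContinuousOn gB' (Ioi 0) := fun x hx =>
  ((hasDerivAt_gB' hx).continuousAt).continuousWithinAt

lemma intIoi : interior (Ioi (0:ℝ)) = Ioi 0 := interior_Ioi

lemma gB_convex : ConvexOn ℝ (Ioi 0) gB := by
  apply convexOn_of_hasDerivWithinAt2_nonneg (convex_Ioi 0) gB_contOn
    (f' := gB') (f'' := gB'')
  · intro x hx
    rw [intIoi] at hx ⊢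
    exact (hasDerivAt_gB hx).hasDerivWithinAt
  · intro x hx
    rw [intIoi] at hx ⊢
    exact (hasDerivAt_gB' hx).hasDerivWithinAt
  · intro x hx
    rw [intIoi] at hx
    exact gB''_nonneg hx

lemma gB'_mono : MonotoneOn gB' (Ioi 0) := by
  apply monotoneOn_of_deriv_nonneg (convex_Ioi 0) gB'_contOn
  · rw [intIoi]
    exact fun x hx => (hasDerivAt_gB' hx).differentiableAt.differentiableWithinAt
  · rw [intIoi]
    intro x hx
    rw [(hasDerivAt_gB' hx).deriv]
    exact gB''_nonneg hx

lemma log_succ_div {x : ℝ} (hx : 0 < x) :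
    Real.log (x+1) - Real.log x = Real.log (1 + 1/x) := by
  rw [← Real.log_div (by positivity) hx.ne']
  congr 1
  field_simp

lemma gB'_tendsto : Tendsto gB' atTop (𝓝 0) := by
  have h1 : Tendsto (fun x : ℝ => Real.log (x+1) - Real.log x) atTop (𝓝 0) := by
    have hlog : Tendsto (fun x : ℝ => Real.log (1 + 1/x)) atTop (𝓝 0) := by
      have h : Tendsto (fun x : ℝ => 1 + 1/x) atTop (𝓝 1) := by
        simpa [one_div] using (tendsto_const_nhds (x := (1:ℝ))).add tendsto_inv_atTop_zero
      have := ((Real.continuousAt_log one_ne_zero).tendsto.comp h)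
      simpa [Function.comp_def] using this
    apply hlog.congr'
    filter_upwards [eventually_gt_atTop (0:ℝ)] with x hx
    exact (log_succ_div hx).symm
  have h2 : Tendsto (fun x : ℝ => (x + 1/2) * ((x+1)⁻¹ - x⁻¹)) atTop (𝓝 0) := by
    have heq : ∀ᶠ x : ℝ in atTop, (x + 1/2) * ((x+1)⁻¹ - x⁻¹)
        = -((1 + (1/2) * x⁻¹) * (1 + x⁻¹)⁻¹ * x⁻¹) := by
      filter_upwards [eventually_gt_atTop (0:ℝ)] with x hx
      have h1 : x + 1 ≠ 0 := by positivity
      field_simp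
      ring
    have : Tendsto (fun x : ℝ => -((1 + (1/2) * x⁻¹) * (1 + x⁻¹)⁻¹ * x⁻¹)) atTop (𝓝 0) := by
      have hx0 : Tendsto (fun x : ℝ => x⁻¹) atTop (𝓝 (0:ℝ)) := tendsto_inv_atTop_zero
      have ha : Tendsto (fun x : ℝ => 1 + (1/2) * x⁻¹) atTop (𝓝 1) := by
        simpa using tendsto_const_nhds.add (hx0.const_mul (1/2:ℝ))
      have hb : Tendsto (fun x : ℝ => (1 + x⁻¹)⁻¹) atTop (𝓝 1) := by
        have : Tendsto (fun x : ℝ => 1 + x⁻¹) atTop (𝓝 1) := by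
          simpa using tendsto_const_nhds.add hx0
        simpa using this.inv₀ one_ne_zero
      simpa using ((ha.mul hb).mul hx0).neg
    exact this.congr' (heq.mono fun x h => h.symm)
  unfold gB'
  simpa using h1.add h2

lemma gB'_nonpos {x : ℝ} (hx : 0 < x) : gB' x ≤ 0 := by
  apply ge_of_tendsto gB'_tendsto
  filter_upwards [eventually_ge_atTop x] with y hy
  exact gB'_mono hx (lt_of_lt_of_le hx hy) hy

lemma gB_anti : AntitoneOn gB (Ioi 0) := by
  apply antitoneOn_of_deriv_nonpos (convex_Ioi 0) gB_contOn
  · rw [interior_Ioi]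
    exact fun x hx => (hasDerivAt_gB hx).differentiableAt.differentiableWithinAt
  · rw [interior_Ioi]
    intro x hx
    rw [(hasDerivAt_gB hx).deriv]
    exact gB'_nonpos hx

lemma gB_tendsto : Tendsto gB atTop (𝓝 0) := by
  have h1 : Tendsto (fun x : ℝ => x * Real.log (1 + 1/x)) atTop (𝓝 1) := by
    simpa [one_div] using Real.tendsto_mul_log_one_add_div_atTop 1
  have h2 : Tendsto (fun x : ℝ => (1/2) * Real.log (1 + 1/x)) atTop (𝓝 0) := by
    have hlog : Tendsto (fun x : ℝ => Real.log (1 + 1/x)) atTop (𝓝 0) := by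
      have h : Tendsto (fun x : ℝ => 1 + 1/x) atTop (𝓝 1) := by
        simpa [one_div] using (tendsto_const_nhds (x := (1:ℝ))).add tendsto_inv_atTop_zero
      simpa [Function.comp_def] using (Real.continuousAt_log one_ne_zero).tendsto.comp h
    simpa using hlog.const_mul (1/2 : ℝ)
  have h3 : Tendsto (fun x : ℝ => x * Real.log (1 + 1/x) + (1/2) * Real.log (1 + 1/x) - 1)
      atTop (𝓝 0) := by
    have := (h1.add h2).sub_const 1
    simpa using this
  apply h3.congr'
  filter_upwards [eventually_gt_atTop (0:ℝ)] with x hx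
  rw [gB, log_succ_div hx]
  ring

lemma gB_nonneg {x : ℝ} (hx : 0 < x) : 0 ≤ gB x := by
  apply le_of_tendsto gB_tendsto
  filter_upwards [eventually_ge_atTop x] with y hy
  exact gB_anti hx (lt_of_lt_of_le hx hy) hy

lemma gB_le {x : ℝ} (hx : 2 ≤ x) : gB x ≤ 4 / x^2 := by
  have hx0 : (0:ℝ) < x := by linarith
  set u : ℝ := 1/x with hu
  have hu0 : 0 < u := by positivity
  have huh : u ≤ 1/2 := by rw [hu]; rw [div_le_div_iff₀ hx0 two_pos]; linarith
  have habs : |(-u)| < 1 := by rw [abs_neg, abs_of_pos hu0]; linarith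
  have hser := Real.abs_log_sub_add_sum_range_le habs 2
  have hsum : (∑ i ∈ Finset.range 2, (-u) ^ (i + 1) / (i + 1)) = -u + u^2/2 := by
    simp [Finset.sum_range_succ]
    ring
  rw [hsum] at hser
  have hlog1 : Real.log (1 - -u) = Real.log (x+1) - Real.log x := by
    rw [log_succ_div hx0]; congr 1; rw [hu]; ring
  rw [hlog1] at hser
  have habs2 : |(-u)| ^ (2+1) / (1 - |(-u)|) ≤ 2 * u^3 := by
    rw [abs_neg, abs_of_pos hu0]
    rw [div_le_iff₀ (by linarith)]
    have he : u^(2+1) = u^3 := by norm_num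
    rw [he]
    nlinarith [mul_nonneg (le_of_lt (pow_pos hu0 3)) (by linarith : (0:ℝ) ≤ 1 - 2*u)]
  have hbound : Real.log (x+1) - Real.log x ≤ u - u^2/2 + 2*u^3 := by
    have := (abs_le.mp (hser.trans habs2)).2
    linarith
  have hgb : gB x ≤ (x + 1/2) * (u - u^2/2 + 2*u^3) - 1 := by
    rw [gB]
    have hpos : (0:ℝ) < x + 1/2 := by linarith
    nlinarith [hbound]
  have hux : u = 1/x := hu
  rw [hux] at hgb
  have key : (x + 1/2) * (1/x - (1/x)^2/2 + 2*(1/x)^3) - 1 = (7*x/4 + 1)/x^3 := by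
    field_simp
    ring
  rw [key] at hgb
  have : (7*x/4 + 1)/x^3 ≤ 4/x^2 := by
    rw [div_le_div_iff₀ (by positivity) (by positivity)]
    nlinarith
  linarith

lemma gB_summable {x : ℝ} (hx : 0 < x) : Summable (fun n : ℕ => gB (x + n)) := by
  rw [← summable_nat_add_iff 2]
  have hb : Summable (fun n : ℕ => 4 / ((n:ℝ) + 2)^2) := by
    have h0 : Summable (fun n : ℕ => 1 / ((n:ℝ))^2) := by
      rw [Real.summable_one_div_nat_pow]
      norm_num
    have h1 := (summable_nat_add_iff 2).mpr h0
    have h2 : Summable (fun n : ℕ => 1 / ((n:ℝ)+2)^2) := by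
      apply h1.congr
      intro n
      push_cast
      ring
    simpa [div_eq_mul_inv] using h2.mul_left 4
  apply Summable.of_nonneg_of_le _ _ hb
  · intro n
    have : (0:ℝ) < x + ↑(n + 2) := by positivity
    exact gB_nonneg this
  · intro n
    have h2 : (2:ℝ) ≤ x + ↑(n+2) := by
      push_cast
      linarith [Nat.cast_nonneg (α := ℝ) n]
    calc gB (x + ↑(n+2)) ≤ 4 / (x + ↑(n+2))^2 := gB_le h2
      _ ≤ 4 / ((n:ℝ)+2)^2 := by
          apply div_le_div_of_nonneg_left (by norm_num) (by positivity)
          push_cast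
          nlinarith [Nat.cast_nonneg (α := ℝ) n, sq_nonneg ((n:ℝ)+2)]

noncomputable def θB (x : ℝ) : ℝ := ∑' n : ℕ, gB (x + n)

lemma θB_rec {x : ℝ} (hx : 0 < x) : θB x = gB x + θB (x + 1) := by
  rw [θB, Summable.tsum_eq_zero_add (gB_summable hx)]
  congr 1
  · norm_num
  · rw [θB]
    apply tsum_congr
    intro n
    congr 1
    push_cast
    ring

lemma θB_convex : ConvexOn ℝ (Ioi 0) θB := by
  refine ⟨convex_Ioi 0, ?_⟩
  intro x hx y hy p q hp hq hpq
  simp only [smul_eq_mul] at *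
  have hx0 : (0:ℝ) < x := hx
  have hy0 : (0:ℝ) < y := hy
  have hmin : (0:ℝ) < min x y := lt_min hx0 hy0
  have hpq0 : 0 < p * x + q * y := by
    nlinarith [min_le_left x y, min_le_right x y]
  have hsum : Summable (fun n : ℕ => p * gB (x + n) + q * gB (y + n)) :=
    ((gB_summable hx0).mul_left p).add ((gB_summable hy0).mul_left q)
  have hle : ∀ n : ℕ, gB (p * x + q * y + n) ≤ p * gB (x + n) + q * gB (y + n) := by
    intro n
    have h1 : p * x + q * y + n = p * (x + n) + q * (y + n) := by
      have : p + q = 1 := hpq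
      nlinarith [this]
    rw [h1]
    have := gB_convex.2 (mem_Ioi.mpr (by positivity : (0:ℝ) < x + n))
      (mem_Ioi.mpr (by positivity : (0:ℝ) < y + n)) hp hq hpq
    simpa using this
  calc θB (p * x + q * y) ≤ ∑' n : ℕ, (p * gB (x + n) + q * gB (y + n)) := by
        apply Summable.tsum_le_tsum hle (gB_summable hpq0) hsum
    _ = p * θB x + q * θB y := by
        rw [Summable.tsum_add ((gB_summable hx0).mul_left p) ((gB_summable hy0).mul_left q),
          tsum_mul_left, tsum_mul_left, θB, θB]

lemma θB_mono_le {x y : ℝ} (hx : 0 < x) (hxy : x ≤ y) : θB y ≤ θB x := by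
  apply Summable.tsum_le_tsum _ (gB_summable (lt_of_lt_of_le hx hxy)) (gB_summable hx)
  intro n
  exact gB_anti (mem_Ioi.mpr (by positivity)) (mem_Ioi.mpr (by nlinarith [Nat.cast_nonneg (α := ℝ) n]))
    (by linarith)

lemma θB_diff_le {x y : ℝ} (N : ℕ) (hx : 2 ≤ x) (hxy : x ≤ y) (hyN : y ≤ x + N) :
    θB x - θB y ≤ N * (4 / x^2) := by
  have hx0 : (0:ℝ) < x := by linarith
  have h1 : ∑' n : ℕ, gB (x + N + n) ≤ θB y := by
    apply Summable.tsum_le_tsum _ _ (gB_summable (by linarith))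
    · intro n
      apply gB_anti (mem_Ioi.mpr (by nlinarith [Nat.cast_nonneg (α := ℝ) n]))
        (mem_Ioi.mpr (by positivity)) (by push_cast; linarith [Nat.cast_nonneg (α := ℝ) n])
    · exact gB_summable (by positivity)
  have h2 : (∑ j ∈ Finset.range N, gB (x + j)) + ∑' n : ℕ, gB (x + N + n) = θB x := by
    have h := Summable.sum_add_tsum_nat_add (f := fun n : ℕ => gB (x + n)) N (gB_summable hx0)
    rw [θB, ← h]
    congr 1
    apply tsum_congr
    intro n
    congr 1
    push_cast
    ring
  have h3 : ∑ j ∈ Finset.range N, gB (x + j) ≤ N * (4 / x^2) := by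
    calc ∑ j ∈ Finset.range N, gB (x + j) ≤ ∑ j ∈ Finset.range N, gB x := by
          apply Finset.sum_le_sum
          intro j _
          exact gB_anti (mem_Ioi.mpr hx0) (mem_Ioi.mpr (by positivity))
            (by linarith [Nat.cast_nonneg (α := ℝ) j])
      _ = N * gB x := by rw [Finset.sum_const, Finset.card_range]; ring
      _ ≤ N * (4 / x^2) := by
          apply mul_le_mul_of_nonneg_left (gB_le hx) (Nat.cast_nonneg N)
  linarith

noncomputable def FB (x : ℝ) : ℝ := (x - 1/2) * Real.log x - x + θB x

lemma FB_rec {x : ℝ} (hx : 0 < x) : FB (x + 1) = FB x + Real.log x := by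
  have h := θB_rec hx
  simp only [FB, h, gB]
  ring

noncomputable def ψB (x : ℝ) : ℝ := (x - 1/2) * Real.log x - x
noncomputable def ψB' (x : ℝ) : ℝ := Real.log x + (x - 1/2) * x⁻¹ - 1
noncomputable def ψB'' (x : ℝ) : ℝ := x⁻¹ + (x⁻¹ - (x - 1/2) * (x⁻¹)^2)

lemma hasDerivAt_ψB {x : ℝ} (hx : 0 < x) : HasDerivAt ψB (ψB' x) x := by
  have h1 : HasDerivAt (fun x : ℝ => (x - 1/2) * Real.log x)
      (1 * Real.log x + (x - 1/2) * x⁻¹) x := by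
    have hlog : HasDerivAt Real.log x⁻¹ x := by
      simpa [one_div] using (hasDerivAt_id x).log hx.ne'
    exact ((hasDerivAt_id x).sub_const (1/2)).mul hlog
  have := h1.sub (hasDerivAt_id x)
  refine this.congr_deriv ?_
  unfold ψB'; ring

lemma hasDerivAt_ψB' {x : ℝ} (hx : 0 < x) : HasDerivAt ψB' (ψB'' x) x := by
  have hlog : HasDerivAt Real.log x⁻¹ x := by
    simpa [one_div] using (hasDerivAt_id x).log hx.ne'
  have hinv : HasDerivAt (fun x : ℝ => x⁻¹) (-1/(x^2)) x := by
    simpa [Pi.inv_def] using (hasDerivAt_id x).inv hx.ne'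
  have h2 : HasDerivAt (fun x : ℝ => (x - 1/2) * x⁻¹)
      (1 * x⁻¹ + (x - 1/2) * (-1/(x^2))) x :=
    ((hasDerivAt_id x).sub_const (1/2)).mul hinv
  have := (hlog.add h2).sub_const 1
  refine this.congr_deriv ?_
  unfold ψB''
  field_simp
  ring

lemma ψB_convex : ConvexOn ℝ (Ioi 0) ψB := by
  apply convexOn_of_hasDerivWithinAt2_nonneg (convex_Ioi 0)
    (f' := ψB') (f'' := ψB'')
  · exact fun x hx => ((hasDerivAt_ψB hx).continuousAt).continuousWithinAt
  · intro x hx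
    rw [interior_Ioi] at hx ⊢
    exact (hasDerivAt_ψB hx).hasDerivWithinAt
  · intro x hx
    rw [interior_Ioi] at hx ⊢
    exact (hasDerivAt_ψB' hx).hasDerivWithinAt
  · intro x hx
    rw [interior_Ioi] at hx
    have hx0 : (0:ℝ) < x := hx
    have : ψB'' x = (x + 1/2) / x^2 := by
      unfold ψB''; field_simp; ring
    rw [this]
    positivity

lemma FB_convex : ConvexOn ℝ (Ioi 0) FB := by
  have : FB = fun x => ψB x + θB x := by
    funext x; simp only [FB, ψB]
  rw [this]
  exact ψB_convex.add θB_convex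

lemma Gamma_eq_FB {x : ℝ} (hx : 0 < x) :
    Real.Gamma x = Real.exp (FB x - FB 1) := by
  have key := Real.eq_Gamma_of_log_convex (f := fun x => Real.exp (FB x - FB 1))
    ?_ ?_ ?_ ?_
  · exact (key (mem_Ioi.mpr hx)).symm
  · have : (Real.log ∘ fun x => Real.exp (FB x - FB 1)) = fun x => FB x + (- FB 1) := by
      funext y; simp [Real.log_exp]; ring
    rw [this]
    exact FB_convex.add (convexOn_const _ (convex_Ioi 0))
  · intro y hy
    rw [FB_rec hy, show FB y + Real.log y - FB 1 = (FB y - FB 1) + Real.log y from by ring,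
      Real.exp_add, Real.exp_log hy]
    ring
  · intro y _
    exact Real.exp_pos _
  · simp

lemma phi_est (t : ℝ) : ∀ z : ℝ, 2*|t| + 2 ≤ z →
    |(z + t - 1/2) * (Real.log (z+t) - Real.log z) - t - (t^2 - t)/(2*z)|
      ≤ (4*|t|^3 + (|t|+1)*t^2 + 1) / z^2 := by
  intro z hz
  have habs_t : 0 ≤ |t| := abs_nonneg t
  have hz0 : (0:ℝ) < z := by linarith
  have hzt : (0:ℝ) < z + t := by
    have := neg_abs_le t
    linarith
  set u : ℝ := t / z with hu
  have huabs : |u| ≤ 1/2 := by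
    rw [hu, abs_div, abs_of_pos hz0, div_le_iff₀ hz0]
    linarith
  have habs : |(-u)| < 1 := by
    rw [abs_neg]; linarith
  have hser := Real.abs_log_sub_add_sum_range_le habs 2
  have hsum : (∑ i ∈ Finset.range 2, (-u) ^ (i + 1) / (i + 1)) = -u + u^2/2 := by
    simp [Finset.sum_range_succ]
    ring
  have hlog1 : Real.log (1 - -u) = Real.log (z+t) - Real.log z := by
    have h1 : 1 - -u = (z+t)/z := by
      rw [hu]; field_simp; ring
    rw [h1, Real.log_div hzt.ne' hz0.ne']
  rw [hsum, hlog1] at hser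
  have hrhs : |(-u)| ^ (2+1) / (1 - |(-u)|) ≤ 2 * |u|^3 := by
    rw [abs_neg]
    have h1 : (1:ℝ)/2 ≤ 1 - |u| := by linarith
    have h3 : |u|^(2+1) = |u|^3 := by norm_num
    rw [h3, div_le_iff₀ (by linarith : (0:ℝ) < 1 - |u|)]
    nlinarith [pow_nonneg (abs_nonneg u) 3]
  have hr : |Real.log (z+t) - Real.log z - (u - u^2/2)| ≤ 2 * |t|^3 / z^3 := by
    have h1 : |Real.log (z+t) - Real.log z - (u - u^2/2)|
        = |(-u + u^2/2) + (Real.log (z+t) - Real.log z)| := by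
      rw [show Real.log (z+t) - Real.log z - (u - u^2/2)
        = (-u + u^2/2) + (Real.log (z+t) - Real.log z) from by ring]
    rw [h1]
    refine (hser.trans hrhs).trans ?_
    rw [hu, abs_div, abs_of_pos hz0, div_pow]
    rw [mul_div_assoc]
  set r : ℝ := Real.log (z+t) - Real.log z - (u - u^2/2) with hrdef
  have hkey : (z + t - 1/2) * (Real.log (z+t) - Real.log z) - t - (t^2 - t)/(2*z)
      = (z + t - 1/2) * r + (-(t - 1/2) * t^2 / (2*z^2)) := by
    rw [hrdef, hu]
    field_simp
    ring
  rw [hkey]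
  have h1 : |(z + t - 1/2) * r| ≤ 4 * |t|^3 / z^2 := by
    rw [abs_mul]
    have ha : |z + t - 1/2| ≤ 2 * z := by
      rw [abs_le]
      constructor
      · have := neg_abs_le t; linarith
      · have := le_abs_self t; linarith
    calc |z + t - 1/2| * |r| ≤ (2*z) * (2 * |t|^3 / z^3) := by
          apply mul_le_mul ha hr (abs_nonneg r) (by linarith)
      _ = 4 * |t|^3 / z^2 := by field_simp; ring
  have h2 : |(-(t - 1/2) * t^2 / (2*z^2))| ≤ ((|t|+1)*t^2) / z^2 := by
    have ha : |t - 1/2| ≤ |t| + 1 := by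
      rw [abs_le]
      constructor
      · linarith [neg_abs_le t]
      · linarith [le_abs_self t]
    have heq : |(-(t - 1/2) * t^2 / (2*z^2))| = |t - 1/2| * t^2 / (2*z^2) := by
      rw [abs_div, abs_mul, abs_neg, abs_of_nonneg (sq_nonneg t),
        abs_of_pos (by positivity : (0:ℝ) < 2*z^2)]
    rw [heq, div_le_div_iff₀ (by positivity) (by positivity)]
    have hint := mul_le_mul_of_nonneg_right ha (mul_nonneg (sq_nonneg t) (sq_nonneg z))
    nlinarith [mul_nonneg (sq_nonneg t) (sq_nonneg z),
      mul_nonneg habs_t (mul_nonneg (sq_nonneg t) (sq_nonneg z))]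
  calc |(z + t - 1/2) * r + (-(t - 1/2) * t^2 / (2*z^2))|
      ≤ |(z + t - 1/2) * r| + |(-(t - 1/2) * t^2 / (2*z^2))| := abs_add_le _ _
    _ ≤ 4 * |t|^3 / z^2 + ((|t|+1)*t^2) / z^2 := add_le_add h1 h2
    _ ≤ (4*|t|^3 + (|t|+1)*t^2 + 1) / z^2 := by
        rw [← add_div, div_le_div_iff₀ (by positivity) (by positivity)]
        nlinarith [sq_nonneg z]

lemma θB_abs_diff {x y : ℝ} (N : ℕ) (hx : 2 ≤ x) (hxy : x ≤ y) (hyN : y ≤ x + N) :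
    |θB x - θB y| ≤ N * (4 / x^2) := by
  rw [abs_of_nonneg (by linarith [θB_mono_le (by linarith : (0:ℝ) < x) hxy])]
  exact θB_diff_le N hx hxy hyN

lemma θB_est (a b : ℝ) : ∃ C Z : ℝ, 0 < C ∧ 1 ≤ Z ∧ ∀ z : ℝ, Z ≤ z →
    |θB (z+a) - θB (z+b)| ≤ C / z^2 := by
  -- reduce to ordered case
  suffices h : ∀ a b : ℝ, a ≤ b → ∃ C Z : ℝ, 0 < C ∧ 1 ≤ Z ∧ ∀ z : ℝ, Z ≤ z →
      |θB (z+a) - θB (z+b)| ≤ C / z^2 by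
    rcases le_total a b with hab | hab
    · exact h a b hab
    · obtain ⟨C, Z, hC, hZ, hbd⟩ := h b a hab
      exact ⟨C, Z, hC, hZ, fun z hz => by rw [abs_sub_comm]; exact hbd z hz⟩
  intro a b hab
  set N : ℕ := ⌈b - a⌉₊ with hN
  refine ⟨16 * N + 1, 2*|a| + 2*|b| + 8, by positivity, by linarith [abs_nonneg a, abs_nonneg b], ?_⟩
  intro z hz
  have hz0 : (0:ℝ) < z := by linarith [abs_nonneg a, abs_nonneg b]
  have hx2 : 2 ≤ z + a := by linarith [neg_abs_le a, abs_nonneg b]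
  have hxz : z/2 ≤ z + a := by linarith [neg_abs_le a, abs_nonneg b]
  have hxy : z + a ≤ z + b := by linarith
  have hyN : z + b ≤ (z + a) + N := by
    have := Nat.le_ceil (b - a)
    rw [← hN] at this
    linarith
  have h1 := θB_abs_diff N hx2 hxy hyN
  refine h1.trans ?_
  have h2 : (4:ℝ) / (z+a)^2 ≤ 4 / (z/2)^2 := by
    apply div_le_div_of_nonneg_left (by norm_num) (by positivity)
    apply pow_le_pow_left₀ (by positivity) hxz
  have h3 : (4:ℝ) / (z/2)^2 = 16 / z^2 := by
    field_simp
    ring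
  calc (N:ℝ) * (4 / (z+a)^2) ≤ N * (16 / z^2) := by
        apply mul_le_mul_of_nonneg_left _ (Nat.cast_nonneg N)
        rw [← h3]; exact h2
    _ = (16*N) / z^2 := by ring
    _ ≤ (16*N + 1) / z^2 := by gcongr; linarith

lemma E_est (a b : ℝ) : ∃ C Z : ℝ, 1 ≤ Z ∧ ∀ z : ℝ, Z ≤ z →
    |FB (z+a) - FB (z+b) - (a-b)*Real.log z - ((a-b)*(a+b-1)/2)/z| ≤ C / z^2 := by
  obtain ⟨Cθ, Zθ, hCθ, hZθ, hθ⟩ := θB_est a b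
  set Ca := 4*|a|^3 + (|a|+1)*a^2 + 1 with hCa
  set Cb := 4*|b|^3 + (|b|+1)*b^2 + 1 with hCb
  refine ⟨Ca + Cb + Cθ, max Zθ (2*|a| + 2*|b| + 2), le_max_of_le_right (by linarith [abs_nonneg a, abs_nonneg b]), ?_⟩
  intro z hz
  have hz1 : Zθ ≤ z := le_trans (le_max_left _ _) hz
  have hz2 : 2*|a| + 2*|b| + 2 ≤ z := le_trans (le_max_right _ _) hz
  have hz0 : (0:ℝ) < z := by linarith [abs_nonneg a, abs_nonneg b]
  have hpa := phi_est a z (by linarith [abs_nonneg b])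
  have hpb := phi_est b z (by linarith [abs_nonneg a])
  have hθz := hθ z hz1
  have hkey : FB (z+a) - FB (z+b) - (a-b)*Real.log z - ((a-b)*(a+b-1)/2)/z
      = ((z + a - 1/2) * (Real.log (z+a) - Real.log z) - a - (a^2 - a)/(2*z))
        - ((z + b - 1/2) * (Real.log (z+b) - Real.log z) - b - (b^2 - b)/(2*z))
        + (θB (z+a) - θB (z+b)) := by
    simp only [FB]
    field_simp
    ring
  rw [hkey]
  calc |_ - _ + (θB (z+a) - θB (z+b))|
      ≤ |((z + a - 1/2) * (Real.log (z+a) - Real.log z) - a - (a^2 - a)/(2*z))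
        - ((z + b - 1/2) * (Real.log (z+b) - Real.log z) - b - (b^2 - b)/(2*z))|
        + |θB (z+a) - θB (z+b)| := abs_add_le _ _
    _ ≤ (|((z + a - 1/2) * (Real.log (z+a) - Real.log z) - a - (a^2 - a)/(2*z))|
        + |((z + b - 1/2) * (Real.log (z+b) - Real.log z) - b - (b^2 - b)/(2*z))|)
        + |θB (z+a) - θB (z+b)| := by
          gcongr
          exact abs_sub _ _
    _ ≤ (Ca / z^2 + Cb / z^2) + Cθ / z^2 := by
          gcongr
    _ = (Ca + Cb + Cθ) / z^2 := by ring

end GammaRatioAux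

open GammaRatioAux

/-- `Γ(z+a)/Γ(z+b) = z^{a-b} (1 + (a-b)(a+b-1)/(2z) + O(|z|^{-2}))` as `z → +∞`. -/
theorem gamma_ratio_asymptotic (a b : ℝ) :
    (fun z : ℝ =>
        Real.Gamma (z + a) / Real.Gamma (z + b) -
          z ^ (a - b) * (1 + (a - b) * (a + b - 1) / (2 * z))) =O[atTop]
      fun z : ℝ => z ^ (a - b - 2) := by
  obtain ⟨C, Z, hZ1, hE⟩ := E_est a b
  set c : ℝ := (a-b)*(a+b-1)/2 with hcdef
  rw [isBigO_iff]
  refine ⟨(C + |c|)^2 + C, ?_⟩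
  filter_upwards [eventually_ge_atTop (max (max Z (C + |c| + 1)) (|a| + |b| + 1))] with z hz
  have hzZ : Z ≤ z := le_trans (le_trans (le_max_left _ _) (le_max_left _ _)) hz
  have hzC : C + |c| + 1 ≤ z := le_trans (le_trans (le_max_right _ _) (le_max_left _ _)) hz
  have hzab : |a| + |b| + 1 ≤ z := le_trans (le_max_right _ _) hz
  have hz0 : (0:ℝ) < z := by linarith
  have hz1 : (1:ℝ) ≤ z := by linarith
  have hza : (0:ℝ) < z + a := by linarith [neg_abs_le a, abs_nonneg b]
  have hzb : (0:ℝ) < z + b := by linarith [neg_abs_le b, abs_nonneg a]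
  set E : ℝ := FB (z+a) - FB (z+b) - (a-b)*Real.log z with hEdef
  have hEb : |E - c/z| ≤ C/z^2 := hE z hzZ
  have hC0 : 0 ≤ C := by
    have h0 : (0:ℝ) ≤ C / z^2 := le_trans (abs_nonneg _) hEb
    have h1 : C = (C / z^2) * z^2 := by field_simp
    rw [h1]
    exact mul_nonneg h0 (sq_nonneg z)
  have hratio : Real.Gamma (z+a) / Real.Gamma (z+b) = z ^ (a-b) * Real.exp E := by
    rw [Gamma_eq_FB hza, Gamma_eq_FB hzb, ← Real.exp_sub,
      Real.rpow_def_of_pos hz0, ← Real.exp_add]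
    congr 1
    rw [hEdef]
    ring
  have hE1 : |E| ≤ (C + |c|) / z := by
    calc |E| ≤ |E - c/z| + |c/z| := by
          have := abs_add_le (E - c/z) (c/z)
          simpa using this
      _ ≤ C/z^2 + |c|/z := by
          apply add_le_add hEb (le_of_eq ?_)
          rw [abs_div, abs_of_pos hz0]
      _ ≤ C/z + |c|/z := by
          apply add_le_add _ le_rfl
          rw [div_le_div_iff₀ (by positivity) (by positivity)]
          nlinarith [mul_nonneg (mul_nonneg hC0 hz0.le) (by linarith : (0:ℝ) ≤ z - 1)]
      _ = (C + |c|) / z := by ring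
  have habsE : |E| ≤ 1 := by
    refine hE1.trans ?_
    rw [div_le_one hz0]
    linarith
  have hexp : |Real.exp E - 1 - E| ≤ E^2 := Real.abs_exp_sub_one_sub_id_le habsE
  have hE2 : E^2 ≤ (C + |c|)^2 / z^2 := by
    have h1 : |E|^2 ≤ ((C + |c|)/z)^2 := by
      apply pow_le_pow_left₀ (abs_nonneg E) hE1
    rw [sq_abs] at h1
    calc E^2 ≤ ((C + |c|)/z)^2 := h1
      _ = (C + |c|)^2 / z^2 := by rw [div_pow]
  have hfinal : |Real.exp E - 1 - c/z| ≤ ((C + |c|)^2 + C) / z^2 := by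
    calc |Real.exp E - 1 - c/z| = |(Real.exp E - 1 - E) + (E - c/z)| := by ring_nf
      _ ≤ |Real.exp E - 1 - E| + |E - c/z| := abs_add_le _ _
      _ ≤ E^2 + C/z^2 := add_le_add hexp hEb
      _ ≤ (C + |c|)^2 / z^2 + C/z^2 := by gcongr
      _ = ((C + |c|)^2 + C) / z^2 := by ring
  have hexpr : Real.Gamma (z + a) / Real.Gamma (z + b) -
      z ^ (a - b) * (1 + (a - b) * (a + b - 1) / (2 * z))
      = z ^ (a-b) * (Real.exp E - 1 - c/z) := by
    rw [hratio, hcdef]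
    have h2 : (a - b) * (a + b - 1) / (2 * z) = ((a-b)*(a+b-1)/2)/z := by
      rw [div_div]
    rw [h2]
    ring
  have hpow : z ^ (a-b-2) = z ^ (a-b) / z^2 := by
    rw [show a - b - 2 = (a-b) - (2:ℕ) from by norm_num, Real.rpow_sub hz0,
      Real.rpow_natCast]
  rw [hexpr]
  have hnorm : ‖z ^ (a-b) * (Real.exp E - 1 - c/z)‖ = z ^ (a-b) * |Real.exp E - 1 - c/z| := by
    rw [norm_mul, Real.norm_eq_abs, Real.norm_eq_abs,
      abs_of_nonneg (Real.rpow_nonneg hz0.le _)]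
  rw [hnorm, Real.norm_eq_abs, abs_of_nonneg (Real.rpow_nonneg hz0.le _), hpow]
  calc z ^ (a-b) * |Real.exp E - 1 - c/z| ≤ z ^ (a-b) * (((C + |c|)^2 + C) / z^2) := by
        exact mul_le_mul_of_nonneg_left hfinal (Real.rpow_nonneg hz0.le _)
    _ = ((C + |c|)^2 + C) * (z ^ (a-b) / z^2) := by ring
end
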